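/- Let D = span(Z) be a 1-dimensional distribution on an n-dimensional manifold N, let Y₁,...,Y_r (r ≤ n-2) be vector fields with Z,Y₁,...,Y_r pointwise linearly independent and [Y_h, D_{h-1}] ⊆ D_{h-1} for h = 1,...,r where D_0 = span(Z), D_h = span(Z,Y₁,...,Y_h), and suppose γ₁,...,γ_{n-r-1} are smooth functions whose differentials are pointwise linearly independent and which are joint invariants of D_r (i.e. Z(γ_j) = Y_i(γ_j) = 0 for all i, j). Then in any local coordinate system (γ₁,...,γ_{n-r-1}, g₁,...,g_{r+1}) extending the γ's, the fields {Y₁,...,Y_r, ∂/∂γ₁, ..., ∂/∂γ_{n-r-1}} form a solvable structure for D. -/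

import Mathlib

/-- Lie bracket of vector fields on `ℝⁿ`. -/
noncomputable def vbracket {n : ℕ} (X Y : (Fin n → ℝ) → (Fin n → ℝ)) :
    (Fin n → ℝ) → (Fin n → ℝ) :=
  fun p => fderiv ℝ Y p (X p) - fderiv ℝ X p (Y p)

/-- `D_h = span(Z, T₁, ..., T_h)` at a point (the `T_j` with `j < h`). -/
noncomputable def Dspan {n r : ℕ}
    (Z : (Fin n → ℝ) → (Fin n → ℝ)) (T : Fin r → (Fin n → ℝ) → (Fin n → ℝ))
    (h : Fin r) (p : Fin n → ℝ) : Submodule ℝ (Fin n → ℝ) :=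
  Submodule.span ℝ (insert (Z p) ((fun j => T j p) '' {j | j < h}))

open Module

lemma key_deriv {n : ℕ} {f : (Fin n → ℝ) → ℝ} {X Yv : (Fin n → ℝ) → (Fin n → ℝ)}
    (hf : ContDiff ℝ (⊤ : ℕ∞) f) (hX : ContDiff ℝ (⊤ : ℕ∞) X) (hY : ContDiff ℝ (⊤ : ℕ∞) Yv)
    {cX cY : ℝ} (hfX : ∀ p, fderiv ℝ f p (X p) = cX) (hfY : ∀ p, fderiv ℝ f p (Yv p) = cY)
    (p : Fin n → ℝ) : fderiv ℝ f p (vbracket X Yv p) = 0 := by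
  have hdf : ∀ y, HasFDerivAt f (fderiv ℝ f y) y :=
    fun y => (hf.differentiable (by simp) y).hasFDerivAt
  have hf' : ContDiff ℝ (⊤ : ℕ∞) (fderiv ℝ f) := hf.fderiv_right (by simp)
  have hf'' : HasFDerivAt (fderiv ℝ f) (fderiv ℝ (fderiv ℝ f) p) p :=
    (hf'.differentiable (by simp) p).hasFDerivAt
  set f'' := fderiv ℝ (fderiv ℝ f) p with hf''def
  have hsymm : ∀ v w, f'' v w = f'' w v := second_derivative_symmetric hdf hf''
  have key : ∀ (V : (Fin n → ℝ) → (Fin n → ℝ)), ContDiff ℝ (⊤ : ℕ∞) V →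
      (∃ c : ℝ, ∀ q, fderiv ℝ f q (V q) = c) →
      ∀ w, fderiv ℝ f p (fderiv ℝ V p w) + f'' w (V p) = 0 := by
    intro V hV ⟨c, hc⟩ w
    have h1 : HasFDerivAt (fun q => fderiv ℝ f q (V q))
        ((fderiv ℝ f p).comp (fderiv ℝ V p) + f''.flip (V p)) p :=
      hf''.clm_apply (hV.differentiable (by simp) p).hasFDerivAt
    have h2 : HasFDerivAt (fun q => fderiv ℝ f q (V q)) (0 : (Fin n → ℝ) →L[ℝ] ℝ) p := by
      have : (fun q => fderiv ℝ f q (V q)) = fun _ => c := funext hc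
      rw [this]; exact hasFDerivAt_const c p
    have := h1.unique h2
    have := congrArg (fun L => L w) this
    simpa using this
  have e1 := key Yv hY ⟨cY, hfY⟩ (X p)
  have e2 := key X hX ⟨cX, hfX⟩ (Yv p)
  have : fderiv ℝ f p (vbracket X Yv p)
      = (fderiv ℝ f p (fderiv ℝ Yv p (X p)) + f'' (X p) (Yv p))
        - (fderiv ℝ f p (fderiv ℝ X p (Yv p)) + f'' (Yv p) (X p)) := by
    rw [hsymm (Yv p) (X p)]
    simp only [vbracket, map_sub]
    ring
  rw [this, e1, e2]; ring

lemma indep_extend {N r m : ℕ} {z : Fin N → ℝ} {y : Fin r → Fin N → ℝ}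
    {w : Fin m → Fin N → ℝ} {φ : Fin m → (Fin N → ℝ) →L[ℝ] ℝ}
    (hz : ∀ j, φ j z = 0) (hy : ∀ j i, φ j (y i) = 0)
    (hw : ∀ j i, φ j (w i) = if j = i then 1 else 0)
    (hind : LinearIndependent ℝ (Fin.cons z y : Fin (r+1) → Fin N → ℝ)) :
    LinearIndependent ℝ (Fin.cons z (Fin.append y w) : Fin (r+m+1) → Fin N → ℝ) := by
  rw [Fintype.linearIndependent_iff] at hind ⊢
  intro c hc
  rw [Fin.sum_univ_succ] at hc
  simp only [Fin.cons_zero, Fin.cons_succ] at hc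
  rw [Fin.sum_univ_add] at hc
  simp only [Fin.append_left, Fin.append_right] at hc
  have hWc : ∀ j : Fin m, c (Fin.natAdd r j).succ = 0 := by
    intro j
    have h2 := congrArg (φ j) hc
    simp only [map_add, map_sum, map_smul, map_zero, hz, hy, hw, smul_eq_mul, mul_zero,
      Finset.sum_const_zero, add_zero, zero_add, mul_ite, mul_one,
      Finset.sum_ite_eq, Finset.mem_univ, if_true] at h2
    exact h2
  have hc2 : c 0 • z + ∑ i : Fin r, c (Fin.castAdd m i).succ • y i = 0 := by
    rw [← hc]
    have : ∑ i : Fin m, c (Fin.natAdd r i).succ • w i = 0 :=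
      Finset.sum_eq_zero (fun i _ => by rw [hWc i, zero_smul])
    rw [this, add_zero]
  set d : Fin (r+1) → ℝ := Fin.cons (c 0) (fun i => c (Fin.castAdd m i).succ) with hd
  have hdz : ∀ k, d k = 0 := by
    apply hind
    rw [Fin.sum_univ_succ]
    simpa only [hd, Fin.cons_zero, Fin.cons_succ] using hc2
  intro k
  refine Fin.cases ?_ (fun k' => ?_) k
  · simpa [hd] using hdz 0
  · refine Fin.addCases (fun i => ?_) (fun j => ?_) k'
    · simpa [hd] using hdz i.succ
    · exact hWc j

open Module

lemma ann_zero {N : ℕ} {ι : Type} [Fintype ι] {ψ : ι → (Fin N → ℝ) →L[ℝ] ℝ}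
    (hψ : LinearIndependent ℝ ψ) (hcard : Fintype.card ι = N) {v : Fin N → ℝ}
    (hv : ∀ k, ψ k v = 0) : v = 0 := by
  have hNe : Nonempty ι ∨ N = 0 := by
    rcases Nat.eq_zero_or_pos N with h | h
    · exact Or.inr h
    · exact Or.inl (Fintype.card_pos_iff.mp (hcard ▸ h))
  rcases hNe with hNe | h0
  · have hli : LinearIndependent ℝ (fun k => (ψ k : (Fin N → ℝ) →ₗ[ℝ] ℝ)) := by
      have : (fun k => (ψ k : (Fin N → ℝ) →ₗ[ℝ] ℝ))
          = (ContinuousLinearMap.coeLM ℝ) ∘ ψ := rfl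
      rw [this]
      exact hψ.map' _ (LinearMap.ker_eq_bot.mpr (fun a b hab =>
        ContinuousLinearMap.coe_injective hab))
    have hcard' : Fintype.card ι = finrank ℝ (Module.Dual ℝ (Fin N → ℝ)) := by
      rw [Subspace.dual_finrank_eq, Module.finrank_fin_fun, hcard]
    let B := basisOfLinearIndependentOfCardEqFinrank hli hcard'
    have hB : ∀ k, B k = (ψ k : (Fin N → ℝ) →ₗ[ℝ] ℝ) := fun k =>
      congrFun (coe_basisOfLinearIndependentOfCardEqFinrank hli hcard') k
    rw [← Module.forall_dual_apply_eq_zero_iff ℝ v]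
    intro φ
    rw [← B.sum_repr φ]
    simp only [LinearMap.coe_sum, Finset.sum_apply, LinearMap.smul_apply, hB]
    simp [hv]
  · subst h0
    exact Subsingleton.elim v 0

open Module

lemma mem_span_of_ann {N r m : ℕ} (hN : r + m + 1 = N) {z : Fin N → ℝ}
    {y : Fin r → Fin N → ℝ} {w : Fin m → Fin N → ℝ}
    {φ : Fin m → (Fin N → ℝ) →L[ℝ] ℝ}
    (hz : ∀ j, φ j z = 0) (hy : ∀ j i, φ j (y i) = 0)
    (hw : ∀ j i, φ j (w i) = if j = i then 1 else 0)
    (hind : LinearIndependent ℝ (Fin.cons z (Fin.append y w) : Fin (r+m+1) → Fin N → ℝ))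
    {v : Fin N → ℝ} (hv : ∀ j, φ j v = 0) :
    v ∈ Submodule.span ℝ (insert z (Set.range y)) := by
  have hcard : Fintype.card (Fin (r+m+1)) = finrank ℝ (Fin N → ℝ) := by
    rw [Module.finrank_fin_fun, Fintype.card_fin, hN]
  let B := basisOfLinearIndependentOfCardEqFinrank hind hcard
  set u : Fin (r+m+1) → Fin N → ℝ := Fin.cons z (Fin.append y w) with hu
  have hB : ∀ k, B k = u k := fun k =>
    congrFun (coe_basisOfLinearIndependentOfCardEqFinrank hind hcard) k
  set c : Fin (r+m+1) → ℝ := fun k => B.repr v k with hcdef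
  have hrepr : v = c 0 • z + ((∑ i : Fin r, c (Fin.castAdd m i).succ • y i)
      + ∑ i : Fin m, c (Fin.natAdd r i).succ • w i) := by
    conv_lhs => rw [← B.sum_repr v]
    rw [Fin.sum_univ_succ, Fin.sum_univ_add]
    simp only [hB, hu, Fin.cons_zero, Fin.cons_succ, Fin.append_left, Fin.append_right, hcdef]
  have hWc : ∀ j : Fin m, c (Fin.natAdd r j).succ = 0 := by
    intro j
    have h2 := hv j
    rw [hrepr] at h2
    simp only [map_add, map_sum, map_smul, hz, hy, hw, smul_eq_mul, mul_zero,
      Finset.sum_const_zero, add_zero, zero_add, mul_ite, mul_one,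
      Finset.sum_ite_eq, Finset.mem_univ, if_true] at h2
    exact h2
  rw [hrepr]
  have hw0 : ∑ i : Fin m, c (Fin.natAdd r i).succ • w i = 0 :=
    Finset.sum_eq_zero (fun i _ => by rw [hWc i, zero_smul])
  rw [hw0, add_zero]
  refine Submodule.add_mem _ ?_ ?_
  · exact Submodule.smul_mem _ _ (Submodule.subset_span (Set.mem_insert _ _))
  · exact Submodule.sum_mem _ (fun i _ => Submodule.smul_mem _ _
      (Submodule.subset_span (Set.mem_insert_of_mem _ (Set.mem_range_self i))))

/-- Let `D = span(Z)` be a 1-dimensional distribution on an `n`-dimensional manifold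
(modelled on `ℝⁿ`, `n = r + 1 + m`, so `m = n - r - 1` and `r ≤ n - 2` when `m ≥ 1`),
let `Y₁, ..., Y_r` be vector fields with `Z, Y₁, ..., Y_r` pointwise linearly
independent and `[Y_h, D_{h-1}] ⊆ D_{h-1}` for `h = 1, ..., r`, and let
`γ₁, ..., γ_{n-r-1}` be smooth functions with pointwise linearly independent
differentials which are joint invariants of `D_r`: `Z(γ_j) = Y_i(γ_j) = 0`.  Given a
local coordinate system `(γ₁, ..., γ_{n-r-1}, g₁, ..., g_{r+1})` extending the `γ`'s
(the differentials of the `γ`'s and `g`'s are pointwise linearly independent), the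
coordinate vector fields `W_i = ∂/∂γ_i` (characterized by `dγ_j(W_i) = δ_{ij}`,
`dg_l(W_i) = 0`) complete `{Y₁, ..., Y_r}` to a solvable structure
`{Y₁, ..., Y_r, ∂/∂γ₁, ..., ∂/∂γ_{n-r-1}}` for `D`. -/
theorem stmt_15 {r m : ℕ}
    (Z : (Fin (r + 1 + m) → ℝ) → (Fin (r + 1 + m) → ℝ))
    (Y : Fin r → (Fin (r + 1 + m) → ℝ) → (Fin (r + 1 + m) → ℝ))
    (γ : Fin m → (Fin (r + 1 + m) → ℝ) → ℝ)
    (g : Fin (r + 1) → (Fin (r + 1 + m) → ℝ) → ℝ)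
    (W : Fin m → (Fin (r + 1 + m) → ℝ) → (Fin (r + 1 + m) → ℝ))
    (hZ : ContDiff ℝ (⊤ : ℕ∞) Z) (hY : ∀ i, ContDiff ℝ (⊤ : ℕ∞) (Y i))
    (hγ : ∀ j, ContDiff ℝ (⊤ : ℕ∞) (γ j)) (hg : ∀ l, ContDiff ℝ (⊤ : ℕ∞) (g l))
    (hW : ∀ i, ContDiff ℝ (⊤ : ℕ∞) (W i))
    (hind : ∀ p, LinearIndependent ℝ (Fin.cons (Z p) (fun i => Y i p) :
      Fin (r + 1) → (Fin (r + 1 + m) → ℝ)))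
    (hsolv : ∀ (h : Fin r) (p : Fin (r + 1 + m) → ℝ),
      vbracket (Y h) Z p ∈ Dspan Z Y h p ∧
      ∀ j : Fin r, j < h → vbracket (Y h) (Y j) p ∈ Dspan Z Y h p)
    (hchart : ∀ p, LinearIndependent ℝ
      (Fin.append (fun j : Fin m => fderiv ℝ (γ j) p)
        (fun l : Fin (r + 1) => fderiv ℝ (g l) p)))
    (hinvZ : ∀ j p, fderiv ℝ (γ j) p (Z p) = 0)
    (hinvY : ∀ j i p, fderiv ℝ (γ j) p (Y i p) = 0)
    (hWγ : ∀ i j p, fderiv ℝ (γ j) p (W i p) = if j = i then 1 else 0)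
    (hWg : ∀ i l p, fderiv ℝ (g l) p (W i p) = 0) :
    (∀ p, LinearIndependent ℝ
      (Fin.cons (Z p) (fun i => Fin.append Y W i p) :
        Fin (r + m + 1) → (Fin (r + 1 + m) → ℝ))) ∧
    (∀ (h : Fin (r + m)) (p : Fin (r + 1 + m) → ℝ),
      vbracket (Fin.append Y W h) Z p ∈ Dspan Z (Fin.append Y W) h p ∧
      ∀ j : Fin (r + m), j < h →
        vbracket (Fin.append Y W h) (Fin.append Y W j) p ∈
          Dspan Z (Fin.append Y W) h p) := by
  have happ : ∀ p, (fun i => Fin.append Y W i p)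
      = Fin.append (fun i => Y i p) (fun i => W i p) := by
    intro p; funext i
    refine Fin.addCases (fun i => ?_) (fun i => ?_) i <;>
      simp only [Fin.append_left, Fin.append_right]
  have hindep : ∀ p, LinearIndependent ℝ
      (Fin.cons (Z p) (fun i => Fin.append Y W i p) :
        Fin (r + m + 1) → (Fin (r + 1 + m) → ℝ)) := by
    intro p
    rw [happ p]
    exact indep_extend (φ := fun j => fderiv ℝ (γ j) p)
      (fun j => hinvZ j p) (fun j i => hinvY j i p) (fun j i => hWγ i j p) (hind p)
  refine ⟨hindep, ?_⟩
  intro h p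
  have hindep' : LinearIndependent ℝ
      (Fin.cons (Z p) (Fin.append (fun i => Y i p) (fun i => W i p)) :
        Fin (r + m + 1) → (Fin (r + 1 + m) → ℝ)) := by
    have := hindep p; rwa [happ p] at this
  refine Fin.addCases (fun i => ?_) (fun i => ?_) h
  · -- h = castAdd m i : the Y part
    simp only [Fin.append_left]
    have hmono : Dspan Z Y i p ≤ Dspan Z (Fin.append Y W) (Fin.castAdd m i) p := by
      apply Submodule.span_mono
      rintro x (rfl | ⟨j, hj, rfl⟩)
      · exact Set.mem_insert _ _
      · refine Set.mem_insert_of_mem _ ⟨Fin.castAdd m j, ?_, ?_⟩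
        · simp only [Set.mem_setOf_eq, Fin.lt_def, Fin.coe_castAdd]
          exact hj
        · simp only [Fin.append_left]
    constructor
    · exact hmono (hsolv i p).1
    · intro j hj
      have hjr : (j : ℕ) < r := lt_trans (by simpa [Fin.lt_def] using hj) i.isLt
      have hj2 : j = Fin.castAdd m ⟨(j : ℕ), hjr⟩ := by ext; rfl
      rw [hj2, Fin.append_left]
      exact hmono ((hsolv i p).2 ⟨(j : ℕ), hjr⟩ (by simpa [Fin.lt_def] using hj))
  · -- h = natAdd r i : the W part
    simp only [Fin.append_right]
    have hle : Submodule.span ℝ (insert (Z p) (Set.range (fun j => Y j p)))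
        ≤ Dspan Z (Fin.append Y W) (Fin.natAdd r i) p := by
      apply Submodule.span_mono
      rintro x (rfl | ⟨j, rfl⟩)
      · exact Set.mem_insert _ _
      · refine Set.mem_insert_of_mem _ ⟨Fin.castAdd m j, ?_, ?_⟩
        · simp only [Set.mem_setOf_eq, Fin.lt_def, Fin.coe_castAdd, Fin.coe_natAdd]
          omega
        · simp only [Fin.append_left]
    have hmemY : ∀ (X : (Fin (r+1+m) → ℝ) → (Fin (r+1+m) → ℝ)), ContDiff ℝ (⊤ : ℕ∞) X →
        (∀ k q, fderiv ℝ (γ k) q (X q) = 0) →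
        vbracket (W i) X p ∈ Dspan Z (Fin.append Y W) (Fin.natAdd r i) p := by
      intro X hXs hXinv
      apply hle
      exact mem_span_of_ann (by omega) (φ := fun j => fderiv ℝ (γ j) p)
        (fun j => hinvZ j p) (fun j i => hinvY j i p) (fun j i => hWγ i j p) hindep'
        (fun k => key_deriv (hγ k) (hW i) hXs (cX := if k = i then 1 else 0) (cY := 0)
          (fun q => hWγ i k q) (fun q => hXinv k q) p)
    constructor
    · exact hmemY Z hZ (fun k q => hinvZ k q)
    · intro j hj
      refine Fin.addCases (motive := fun j => j < Fin.natAdd r i →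
          vbracket (W i) (Fin.append Y W j) p ∈
            Dspan Z (Fin.append Y W) (Fin.natAdd r i) p)
        (fun j' _ => ?_) (fun j' hj' => ?_) j hj
      · rw [Fin.append_left]
        exact hmemY (Y j') (hY j') (fun k q => hinvY k j' q)
      · rw [Fin.append_right]
        have hzero : vbracket (W i) (W j') p = 0 := by
          apply ann_zero (hchart p) (by rw [Fintype.card_fin]; omega)
          intro k
          refine Fin.addCases (fun k' => ?_) (fun l => ?_) k
          · simp only [Fin.append_left]
            exact key_deriv (hγ k') (hW i) (hW j') (cX := if k' = i then 1 else 0)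
              (cY := if k' = j' then 1 else 0)
              (fun q => hWγ i k' q) (fun q => hWγ j' k' q) p
          · rw [Fin.append_right]
            exact key_deriv (hg l) (hW i) (hW j') (cX := 0) (cY := 0)
              (fun q => hWg i l q) (fun q => hWg j' l q) p
        rw [hzero]
        exact Submodule.zero_mem _
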